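/- arXiv:1905.03598 — 2 statements merged into one kernel-verified Lean document; each statement's English description precedes it below -/
import Mathlib

section
/- Suppose Y^n = (Y_1, …, Y_n) is i.i.d., S is independent of Y^n, J = f(Y^n, S) is a function of (Y^n, S), and for each t the Markov chain Z^{t−1} − (Y^{t−1}, J, S) − Y_t holds. Then H(J) ≥ Σ_{t=1}^n I(Y_t; Z^{t−1}, J, S). -/
open scoped BigOperators Classical

noncomputable section

/-- A probability distribution on a finite sample space. -/
structure FinProb (Ω : Type*) [Fintype Ω] where
  p : Ω → ℝ
  nonneg : ∀ ω, 0 ≤ p ω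
  sum_one : ∑ ω, p ω = 1

variable {Ω : Type*} [Fintype Ω]

/-- Probability of an event. -/
def FinProb.pr (μ : FinProb Ω) (E : Set Ω) : ℝ :=
  ∑ ω, if ω ∈ E then μ.p ω else 0

/-- Distribution (pmf) of a random variable. -/
def dist {A : Type*} [Fintype A] (μ : FinProb Ω) (X : Ω → A) (a : A) : ℝ :=
  ∑ ω, if X ω = a then μ.p ω else 0

/-- Shannon entropy (in bits) of a finite-valued random variable. -/
def Hent {A : Type*} [Fintype A] (μ : FinProb Ω) (X : Ω → A) : ℝ :=
  ∑ a, -(dist μ X a * Real.logb 2 (dist μ X a))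

/-- Conditional entropy H(X|Y) (in bits). -/
def Hcond {A B : Type*} [Fintype A] [Fintype B] (μ : FinProb Ω) (X : Ω → A) (Y : Ω → B) : ℝ :=
  Hent μ (fun ω => (X ω, Y ω)) - Hent μ Y

/-- Mutual information I(X;Y) (in bits). -/
def MuI {A B : Type*} [Fintype A] [Fintype B] (μ : FinProb Ω) (X : Ω → A) (Y : Ω → B) : ℝ :=
  Hent μ X + Hent μ Y - Hent μ (fun ω => (X ω, Y ω))

/-- Independence of two random variables. -/
def IndepRV {A B : Type*} [Fintype A] [Fintype B] (μ : FinProb Ω) (X : Ω → A) (Y : Ω → B) : Prop :=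
  ∀ a b, dist μ (fun ω => (X ω, Y ω)) (a, b) = dist μ X a * dist μ Y b

/-- A random variable is uniformly distributed. -/
def Uniform {A : Type*} [Fintype A] (μ : FinProb Ω) (X : Ω → A) : Prop :=
  ∀ a, dist μ X a = 1 / (Fintype.card A : ℝ)

/-- Markov chain X − Y − Z: X and Z conditionally independent given Y. -/
def Markov {A B C : Type*} [Fintype A] [Fintype B] [Fintype C]
    (μ : FinProb Ω) (X : Ω → A) (Y : Ω → B) (Z : Ω → C) : Prop :=
  ∀ a b c, dist μ (fun ω => (X ω, Y ω, Z ω)) (a, b, c) * dist μ Y b =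
    dist μ (fun ω => (X ω, Y ω)) (a, b) * dist μ (fun ω => (Y ω, Z ω)) (b, c)

/-- Markov chain Z − X − Y − U of length four. -/
def Markov4 {A B C D : Type*} [Fintype A] [Fintype B] [Fintype C] [Fintype D]
    (μ : FinProb Ω) (Z : Ω → A) (X : Ω → B) (Y : Ω → C) (U : Ω → D) : Prop :=
  Markov μ Z X (fun ω => (Y ω, U ω)) ∧ Markov μ (fun ω => (Z ω, X ω)) Y U

/-- The process `Y` is i.i.d. -/
def IID {n : ℕ} {A : Type*} [Fintype A] (μ : FinProb Ω) (Y : Fin n → Ω → A) : Prop :=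
  (∀ y : Fin n → A, dist μ (fun ω t => Y t ω) y = ∏ t, dist μ (Y t) (y t)) ∧
  (∀ t t' a, dist μ (Y t) a = dist μ (Y t') a)

/-- The prefix (Y_1, …, Y_{t-1}) of a process, as a single random variable. -/
def prefixRV {n : ℕ} {A : Type*} (Y : Fin n → Ω → A) (t : Fin n) : Ω → (Fin t.1 → A) :=
  fun ω s => Y (Fin.castLE t.isLt.le s) ω

end

/-!
Adjoining `Y^{t-1}` to the observation can only increase `I(Y_t; ·)`, and by the Markov chain
it then makes `Z^{t-1}` redundant, so the `t`-th summand is at most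
`I(Y_t; Y^{t-1}, J, S) = H(Y_t) - H(Y_t | Y^{t-1}, J, S)`. By the chain rule these conditional
entropies add up to `H(Y^n, J, S) - H(J, S)`. Since `J` is a function of `(Y^n, S)`, `S` is
independent of `Y^n` and the `Y_t` are independent, `H(Y^n, J, S) = ∑ H(Y_t) + H(S)`, which
leaves `H(J, S) - H(S) ≤ H(J)`.

Entropies are handled in the form `H(X) = -E[log p_X(X)]`: an identity between joint laws on
the support turns into an identity between entropies, and Gibbs' inequality gives
submodularity.
-/

section Gibbs

open Finset Real

theorem mul_logb_le_mul_logb_add {p q : ℝ} (hp : 0 ≤ p) (hq : 0 ≤ q)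
    (hpq : p ≠ 0 → q ≠ 0) :
    p * logb 2 q ≤ p * logb 2 p + (q - p) / log 2 := by
  rcases hp.eq_or_lt with rfl | hp
  · simp only [zero_mul, sub_zero, zero_add]
    positivity
  have hq : 0 < q := hq.lt_of_ne' (hpq hp.ne')
  have hlog : p * log q ≤ p * log p + (q - p) := by
    have := mul_le_mul_of_nonneg_left (log_le_sub_one_of_pos (div_pos hq hp)) hp.le
    rw [log_div hq.ne' hp.ne', mul_sub_one, mul_div_cancel₀ _ hp.ne'] at this
    linarith
  simp only [logb, ← mul_div_assoc, ← add_div]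
  gcongr

theorem sum_mul_logb_le_sum_mul_logb {ι : Type*} [Fintype ι] {p q : ι → ℝ}
    (hp : ∀ i, 0 ≤ p i) (hq : ∀ i, 0 ≤ q i) (hpq : ∀ i, p i ≠ 0 → q i ≠ 0)
    (hsum : ∑ i, q i ≤ ∑ i, p i) :
    ∑ i, p i * logb 2 (q i) ≤ ∑ i, p i * logb 2 (p i) :=
  calc ∑ i, p i * logb 2 (q i)
      ≤ ∑ i, (p i * logb 2 (p i) + (q i - p i) / log 2) :=
        sum_le_sum fun i _ => mul_logb_le_mul_logb_add (hp i) (hq i) (hpq i)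
    _ = ∑ i, p i * logb 2 (p i) + (∑ i, q i - ∑ i, p i) / log 2 := by
        rw [sum_add_distrib, ← sum_div, sum_sub_distrib]
    _ ≤ ∑ i, p i * logb 2 (p i) :=
        add_le_of_nonpos_right (div_nonpos_of_nonpos_of_nonneg (by linarith)
          (log_nonneg one_le_two))

end Gibbs

namespace FinProb

open Finset Real

variable {Ω : Type*} [Fintype Ω] (μ : FinProb Ω)
  {A B C : Type*} [Fintype A] [Fintype B] [Fintype C]

theorem dist_nonneg (X : Ω → A) (a : A) : 0 ≤ dist μ X a :=
  sum_nonneg fun ω _ => ite_nonneg (μ.nonneg ω) le_rfl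

theorem sum_dist_mul (X : Ω → A) (F : A → ℝ) :
    ∑ a, dist μ X a * F a = ∑ ω, μ.p ω * F (X ω) := by
  simp only [_root_.dist, sum_mul, ite_mul, zero_mul]
  rw [sum_comm]
  simp

theorem sum_dist (X : Ω → A) : ∑ a, dist μ X a = 1 := by
  simpa [μ.sum_one] using sum_dist_mul μ X 1

theorem p_le_dist (X : Ω → A) (ω : Ω) : μ.p ω ≤ dist μ X (X ω) := by
  unfold _root_.dist
  simpa using single_le_sum (fun ω' _ => ite_nonneg (μ.nonneg ω') le_rfl) (mem_univ ω)
    (f := fun ω' => if X ω' = X ω then μ.p ω' else 0)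

theorem dist_pos_of_ne_zero (X : Ω → A) {ω : Ω} (hω : μ.p ω ≠ 0) : 0 < dist μ X (X ω) :=
  ((μ.nonneg ω).lt_of_ne' hω).trans_le (μ.p_le_dist X ω)

theorem sum_dist_pair_left (X : Ω → A) (W : Ω → B) (w : B) :
    ∑ a, dist μ (fun ω => (X ω, W ω)) (a, w) = dist μ W w := by
  simp only [_root_.dist, Prod.mk.injEq, ite_and]
  rw [sum_comm]
  simp

theorem sum_dist_pair_right (W : Ω → B) (V : Ω → C) (w : B) :
    ∑ v, dist μ (fun ω => (W ω, V ω)) (w, v) = dist μ W w := by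
  simp only [_root_.dist, Prod.mk.injEq, ite_and]
  rw [sum_comm]
  simp

theorem hent_eq_neg_sum_dist_mul_logb (X : Ω → A) :
    Hent μ X = -∑ a, dist μ X a * logb 2 (dist μ X a) := by
  simp [Hent]

theorem hent_eq_neg_sum_p_mul_logb (X : Ω → A) :
    Hent μ X = -∑ ω, μ.p ω * logb 2 (dist μ X (X ω)) := by
  rw [hent_eq_neg_sum_dist_mul_logb, sum_dist_mul]

theorem hent_eq_of_injective {g : A → B} (hg : Function.Injective g) {X : Ω → A} {Y : Ω → B}
    (hY : ∀ ω, Y ω = g (X ω)) : Hent μ Y = Hent μ X := by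
  have hdist : ∀ a, dist μ Y (g a) = dist μ X a := by
    intro a
    simp only [_root_.dist, hY, hg.eq_iff]
  simp only [hent_eq_neg_sum_p_mul_logb, hY, hdist]

theorem hent_pair_comm (X : Ω → A) (V : Ω → B) :
    Hent μ (fun ω => (X ω, V ω)) = Hent μ (fun ω => (V ω, X ω)) :=
  μ.hent_eq_of_injective Prod.swap_injective fun _ => rfl

theorem hent_const (a : A) : Hent μ (fun _ => a) = 0 := by
  simp [hent_eq_neg_sum_p_mul_logb, _root_.dist, μ.sum_one]

theorem hent_le_neg_sum_mul_logb (T : Ω → A) {q : A → ℝ} (hq : ∀ a, 0 ≤ q a)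
    (hsum : ∑ a, q a ≤ 1) (hpos : ∀ ω, μ.p ω ≠ 0 → 0 < q (T ω)) :
    Hent μ T ≤ -∑ ω, μ.p ω * logb 2 (q (T ω)) := by
  rw [hent_eq_neg_sum_dist_mul_logb, ← sum_dist_mul μ T (fun a => logb 2 (q a)), neg_le_neg_iff]
  refine sum_mul_logb_le_sum_mul_logb (μ.dist_nonneg T) hq (fun a ha => ?_)
    (by rwa [sum_dist])
  obtain ⟨ω, -, hω⟩ := exists_ne_zero_of_sum_ne_zero ha
  split_ifs at hω with hTa
  · exact hTa ▸ (hpos ω hω).ne'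
  · exact (hω rfl).elim

theorem hent_submodular (X : Ω → A) (W : Ω → B) (V : Ω → C) :
    Hent μ (fun ω => (X ω, W ω, V ω)) + Hent μ W ≤
      Hent μ (fun ω => (X ω, W ω)) + Hent μ (fun ω => (W ω, V ω)) := by
  -- the law of a triple with the marginals of `(X, W)` and `(W, V)`, conditionally
  -- independent given the middle coordinate
  let q : A × B × C → ℝ := fun x => dist μ (fun ω => (X ω, W ω)) (x.1, x.2.1) *
    dist μ (fun ω => (W ω, V ω)) x.2 / dist μ W x.2.1
  have hq_sum : ∑ x, q x = 1 := by
    simp only [q, Fintype.sum_prod_type]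
    rw [sum_comm, ← μ.sum_dist W]
    refine sum_congr rfl fun w _ => ?_
    simp only [← sum_div, ← mul_sum, ← sum_mul, μ.sum_dist_pair_right, μ.sum_dist_pair_left,
      mul_self_div_self]
  set XW := fun ω => (X ω, W ω)
  set WV := fun ω => (W ω, V ω)
  have hq_log : ∀ ω, μ.p ω * logb 2 (q (X ω, W ω, V ω)) = μ.p ω * logb 2 (dist μ XW (XW ω)) +
      μ.p ω * logb 2 (dist μ WV (WV ω)) - μ.p ω * logb 2 (dist μ W (W ω)) := by
    intro ω
    rcases eq_or_ne (μ.p ω) 0 with hω | hω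
    · simp [hω]
    have hXW := μ.dist_pos_of_ne_zero XW hω
    have hWV := μ.dist_pos_of_ne_zero WV hω
    have hW := μ.dist_pos_of_ne_zero W hω
    rw [logb_div (by positivity) hW.ne', logb_mul hXW.ne' hWV.ne']
    ring
  have hcross := μ.hent_le_neg_sum_mul_logb (fun ω => (X ω, W ω, V ω)) (q := q)
    (fun x => div_nonneg (mul_nonneg (μ.dist_nonneg _ _) (μ.dist_nonneg _ _)) (μ.dist_nonneg _ _))
    hq_sum.le fun ω hω => div_pos (mul_pos (μ.dist_pos_of_ne_zero XW hω)
      (μ.dist_pos_of_ne_zero WV hω)) (μ.dist_pos_of_ne_zero W hω)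
  simp only [hq_log, sum_sub_distrib, sum_add_distrib] at hcross
  simp only [hent_eq_neg_sum_p_mul_logb] at hcross ⊢
  linarith

theorem hent_pair_of_indep {X : Ω → A} {V : Ω → B} (h : IndepRV μ X V) :
    Hent μ (fun ω => (X ω, V ω)) = Hent μ X + Hent μ V := by
  simp only [hent_eq_neg_sum_p_mul_logb, ← neg_add, ← sum_add_distrib, ← mul_add]
  congr 2 with ω
  rcases eq_or_ne (μ.p ω) 0 with hω | hω
  · simp [hω]
  · rw [h, logb_mul (μ.dist_pos_of_ne_zero X hω).ne' (μ.dist_pos_of_ne_zero V hω).ne']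

theorem hent_pi_of_dist_eq_prod {ι : Type*} [Fintype ι] [DecidableEq ι] {Y : ι → Ω → A}
    (h : ∀ y, dist μ (fun ω i => Y i ω) y = ∏ i, dist μ (Y i) (y i)) :
    Hent μ (fun ω i => Y i ω) = ∑ i, Hent μ (Y i) := by
  simp only [hent_eq_neg_sum_p_mul_logb, ← sum_neg_distrib]
  rw [sum_comm]
  congr 1 with ω
  rcases eq_or_ne (μ.p ω) 0 with hω | hω
  · simp [hω]
  · rw [h, logb_prod _ _ fun i _ => (μ.dist_pos_of_ne_zero (Y i) hω).ne', mul_sum, sum_neg_distrib]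

theorem hent_add_hent_of_markov {X : Ω → A} {W : Ω → B} {V : Ω → C} (h : Markov μ X W V) :
    Hent μ (fun ω => (X ω, W ω, V ω)) + Hent μ W =
      Hent μ (fun ω => (X ω, W ω)) + Hent μ (fun ω => (W ω, V ω)) := by
  simp only [hent_eq_neg_sum_p_mul_logb, ← neg_add, ← sum_add_distrib, ← mul_add]
  congr 2 with ω
  rcases eq_or_ne (μ.p ω) 0 with hω | hω
  · simp [hω]
  rw [← logb_mul, ← logb_mul, h] <;> exact (μ.dist_pos_of_ne_zero _ hω).ne'

theorem muI_comp_le (X : Ω → A) (U : Ω → B) (g : B → C) :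
    MuI μ X (fun ω => g (U ω)) ≤ MuI μ X U := by
  have hXU : Hent μ (fun ω => (X ω, g (U ω), U ω)) = Hent μ (fun ω => (X ω, U ω)) :=
    μ.hent_eq_of_injective (g := fun x => (x.1, g x.2, x.2))
      (fun x y h => by simp_all [Prod.ext_iff]) fun _ => rfl
  have hU : Hent μ (fun ω => (g (U ω), U ω)) = Hent μ U :=
    μ.hent_eq_of_injective (g := fun x => (g x, x)) (fun x y h => by simp_all [Prod.ext_iff])
      fun _ => rfl
  have := μ.hent_submodular X (fun ω => g (U ω)) U
  unfold MuI
  linarith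

theorem muI_nonneg (X : Ω → A) (V : Ω → B) : 0 ≤ MuI μ X V := by
  have hX : Hent μ (fun ω => (X ω, ())) = Hent μ X :=
    μ.hent_eq_of_injective (g := fun x => (x, ())) (fun x y h => by simp_all) fun _ => rfl
  have := μ.muI_comp_le X V fun _ => ()
  unfold MuI at this ⊢
  rw [hent_const, hX] at this
  linarith

theorem muI_pair_eq_of_markov {X : Ω → A} {W : Ω → B} {V : Ω → C} (h : Markov μ X W V) :
    MuI μ V (fun ω => (X ω, W ω)) = MuI μ V W := by
  have hVXW : Hent μ (fun ω => (V ω, X ω, W ω)) = Hent μ (fun ω => (X ω, W ω, V ω)) :=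
    μ.hent_eq_of_injective (g := fun x => (x.2.2, x.1, x.2.1))
      (fun x y h => by simp_all [Prod.ext_iff]) fun _ => rfl
  have := μ.hent_add_hent_of_markov h
  unfold MuI
  rw [hVXW, hent_pair_comm μ V W]
  linarith

theorem muI_eq_hent_sub_hcond (X : Ω → A) (V : Ω → B) :
    MuI μ X V = Hent μ X - Hcond μ X V := by
  unfold MuI Hcond
  ring

theorem hent_pi_pair_eq_add_sum_hcond {n : ℕ} (Y : Fin n → Ω → A) (V : Ω → B) :
    Hent μ (fun ω => ((fun t => Y t ω), V ω)) =
      Hent μ V + ∑ t, Hcond μ (Y t) (fun ω => (prefixRV Y t ω, V ω)) := by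
  induction n with
  | zero =>
    simp only [univ_eq_empty, sum_empty, add_zero]
    exact μ.hent_eq_of_injective (g := fun v => (Fin.elim0, v))
      (fun x y h => by simp_all [Prod.ext_iff]) fun ω => by simp [Prod.ext_iff, funext_iff]
  | succ n ih =>
    have hsnoc : Hent μ (fun ω => ((fun t => Y t ω), V ω)) =
        Hent μ (fun ω => (Y (Fin.last n) ω, prefixRV Y (Fin.last n) ω, V ω)) :=
      μ.hent_eq_of_injective (g := fun x => (Fin.snoc x.2.1 x.1, x.2.2))
        (fun x y h => by
          simp only [Prod.mk.injEq] at h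
          have := congrArg Fin.init h.1
          have := congrFun h.1 (Fin.last n)
          simp_all [Prod.ext_iff])
        fun ω => Prod.ext (Fin.snoc_init_self _).symm rfl
    have hinit : Hent μ (fun ω => (prefixRV Y (Fin.last n) ω, V ω)) = Hent μ V +
        ∑ t : Fin n, Hcond μ (Y t.castSucc) (fun ω => (prefixRV Y t.castSucc ω, V ω)) :=
      ih fun t => Y t.castSucc
    rw [Fin.sum_univ_castSucc, hsnoc, ← add_assoc, ← hinit]
    unfold Hcond
    ring

end FinProb

/-- Converse bound for the template rate: H(J) ≥ Σ_t I(Y_t; Z^{t−1}, J, S). -/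
theorem template_rate_converse {Ω 𝒴 𝒵 𝒮 𝒥 : Type*} [Fintype Ω] [Fintype 𝒴]
    [Fintype 𝒵] [Fintype 𝒮] [Fintype 𝒥]
    (μ : FinProb Ω) (n : ℕ) (Y : Fin n → Ω → 𝒴) (Z : Fin n → Ω → 𝒵)
    (S : Ω → 𝒮) (J : Ω → 𝒥) (f : (Fin n → 𝒴) → 𝒮 → 𝒥)
    (hiid : IID μ Y)
    (hS : IndepRV μ S (fun ω t => Y t ω))
    (hJ : ∀ ω, J ω = f (fun t => Y t ω) (S ω))
    (hMar : ∀ t : Fin n, Markov μ (prefixRV Z t)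
      (fun ω => (prefixRV Y t ω, J ω, S ω)) (Y t)) :
    Hent μ J ≥ ∑ t, MuI μ (Y t) (fun ω => (prefixRV Z t ω, J ω, S ω)) := by
  have hY : Hent μ (fun ω t => Y t ω) = ∑ t, Hent μ (Y t) := μ.hent_pi_of_dist_eq_prod hiid.1
  have hYJS : Hent μ (fun ω => ((fun t => Y t ω), J ω, S ω)) =
      Hent μ (fun ω t => Y t ω) + Hent μ S := by
    rw [μ.hent_eq_of_injective (g := fun x : (Fin n → 𝒴) × 𝒮 => (x.1, f x.1 x.2, x.2))
      (X := fun ω => ((fun t => Y t ω), S ω)) (fun x y h => by simp_all [Prod.ext_iff])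
      fun ω => by simp [hJ], μ.hent_pair_comm, μ.hent_pair_of_indep hS, add_comm]
  have hchain := μ.hent_pi_pair_eq_add_sum_hcond Y fun ω => (J ω, S ω)
  have hJS := μ.muI_nonneg J S
  unfold MuI at hJS
  calc ∑ t, MuI μ (Y t) (fun ω => (prefixRV Z t ω, J ω, S ω))
      ≤ ∑ t, MuI μ (Y t) (fun ω => (prefixRV Y t ω, J ω, S ω)) := Finset.sum_le_sum fun t _ =>
        (μ.muI_comp_le (Y t) (fun ω => (prefixRV Z t ω, prefixRV Y t ω, J ω, S ω))
          fun x => (x.1, x.2.2)).trans (μ.muI_pair_eq_of_markov (hMar t)).le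
    _ = ∑ t, Hent μ (Y t) - ∑ t, Hcond μ (Y t) (fun ω => (prefixRV Y t ω, J ω, S ω)) := by
        simp only [FinProb.muI_eq_hent_sub_hcond, Finset.sum_sub_distrib]
    _ ≤ Hent μ J := by linarith
end

section
/- If X^n is i.i.d., J is a function of (Y^n, S) where Y^n is the output of a memoryless channel with input X^n, and S is independent of (X^n, Y^n), then (1/n) I(X^n; J, S ⊕ S') = (1/n) I(X^n; J) whenever S' is determined by (Y^n, S) and S is uniform; in particular the chosen-secret privacy leakage equals the generated-secret privacy leakage. -/
open scoped BigOperators Classical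

noncomputable section Aux

variable {Ω : Type*} [Fintype Ω]

lemma dist_comp {B C : Type*} [Fintype B] [Fintype C] (μ : FinProb Ω)
    (V : Ω → B) (g : B → C) (c : C) :
    dist μ (fun ω => g (V ω)) c = ∑ b, if g b = c then dist μ V b else 0 := by
  classical
  unfold _root_.dist
  have h1 : ∀ b : B, (if g b = c then (∑ ω, if V ω = b then μ.p ω else 0) else 0) =
      ∑ ω, if V ω = b ∧ g b = c then μ.p ω else 0 := by
    intro b
    split_ifs with hP
    · exact Finset.sum_congr rfl fun ω _ => by simp [hP]
    · exact (Finset.sum_eq_zero fun ω _ => by simp [hP]).symm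
  rw [Finset.sum_congr rfl fun b _ => h1 b, Finset.sum_comm]
  refine Finset.sum_congr rfl fun ω _ => ?_
  rw [Finset.sum_eq_single (V ω)]
  · simp
  · intro b _ hb
    simp [Ne.symm hb]
  · intro habs
    exact absurd (Finset.mem_univ _) habs

lemma dist_sum_one {B : Type*} [Fintype B] (μ : FinProb Ω) (V : Ω → B) :
    ∑ b, dist μ V b = 1 := by
  classical
  unfold _root_.dist
  rw [Finset.sum_comm, ← μ.sum_one]
  exact Finset.sum_congr rfl fun ω _ => by simp

lemma dist_pair_add_unif {B C : Type*} [Fintype B] [Fintype C] (μ : FinProb Ω)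
    (M : ℕ) [NeZero M] (S : Ω → ZMod M) (V : Ω → B)
    (hunif : Uniform μ S) (hind : IndepRV μ S V)
    (f : B → ZMod M) (h : B → C) (c : C) (m : ZMod M) :
    dist μ (fun ω => (h (V ω), S ω + f (V ω))) (c, m) =
      dist μ (fun ω => h (V ω)) c * (1 / (M : ℝ)) := by
  classical
  have hM : (Fintype.card (ZMod M) : ℝ) = (M : ℝ) := by rw [ZMod.card M]
  refine (dist_comp μ (fun ω => (S ω, V ω))
      (fun sb => (h sb.2, sb.1 + f sb.2)) (c, m)).trans ?_
  rw [dist_comp μ V h c, Finset.sum_mul, Fintype.sum_prod_type, Finset.sum_comm]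
  refine Finset.sum_congr rfl fun b _ => ?_
  have hrw : ∀ s : ZMod M,
      dist μ (fun ω => (S ω, V ω)) (s, b) = (1 / (M : ℝ)) * dist μ V b := by
    intro s
    rw [hind s b, hunif s, hM]
  rcases eq_or_ne (h b) c with hb | hb
  · have heq : ∀ s : ZMod M, (s + f b = m) ↔ (s = m - f b) := fun s => by
      rw [eq_sub_iff_add_eq]
    simp only [Prod.mk.injEq, hb, true_and, hrw, heq]
    rw [Finset.sum_ite_eq' Finset.univ (m - f b) (fun _ => (1 / (M : ℝ)) * dist μ V b)]
    simp [hb]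
    ring
  · simp [Prod.ext_iff, hb]

lemma hent_pair_unif {C : Type*} [Fintype C] (μ : FinProb Ω)
    (M : ℕ) [NeZero M] (W : Ω → C) (T : Ω → ZMod M)
    (h : ∀ c m, dist μ (fun ω => (W ω, T ω)) (c, m) = dist μ W c * (1 / (M : ℝ))) :
    Hent μ (fun ω => (W ω, T ω)) = Hent μ W + Real.logb 2 M := by
  classical
  have hM : (M : ℝ) ≠ 0 := Nat.cast_ne_zero.mpr (NeZero.ne M)
  unfold Hent
  rw [Fintype.sum_prod_type]
  have step : ∀ c : C, (∑ m : ZMod M, -(dist μ (fun ω => (W ω, T ω)) (c, m) *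
        Real.logb 2 (dist μ (fun ω => (W ω, T ω)) (c, m)))) =
      -(dist μ W c * Real.logb 2 (dist μ W c)) + dist μ W c * Real.logb 2 M := by
    intro c
    rw [Finset.sum_congr rfl fun m _ => by rw [h c m]]
    rw [Finset.sum_const, Finset.card_univ, ZMod.card M, nsmul_eq_mul]
    rcases eq_or_ne (dist μ W c) 0 with h0 | h0
    · simp [h0]
    · rw [show dist μ W c * (1 / (M : ℝ)) = dist μ W c / M by ring,
        Real.logb_div h0 hM]
      field_simp
      ring
  rw [Finset.sum_congr rfl fun c _ => step c, Finset.sum_add_distrib, ← Finset.sum_mul,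
    dist_sum_one, one_mul]

lemma dist_comp_equiv {A B : Type*} [Fintype A] [Fintype B] (μ : FinProb Ω)
    (Z : Ω → A) (e : A ≃ B) (a : A) :
    dist μ (fun ω => e (Z ω)) (e a) = dist μ Z a := by
  classical
  unfold _root_.dist
  exact Finset.sum_congr rfl fun ω _ => by simp [e.injective.eq_iff]

lemma hent_comp_equiv {A B : Type*} [Fintype A] [Fintype B] (μ : FinProb Ω)
    (Z : Ω → A) (e : A ≃ B) :
    Hent μ (fun ω => e (Z ω)) = Hent μ Z := by
  classical
  unfold Hent
  rw [← Equiv.sum_comp e (fun b => -(dist μ (fun ω => e (Z ω)) b *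
      Real.logb 2 (dist μ (fun ω => e (Z ω)) b)))]
  exact Finset.sum_congr rfl fun a _ => by rw [dist_comp_equiv μ Z e a]

end Aux

/-- Chosen-secret privacy leakage equals generated-secret privacy leakage:
(1/n) I(X^n; J', S⊕S') = (1/n) I(X^n; J'). -/
theorem cs_leakage_eq_gs_leakage {Ω 𝒳 𝒴 𝒥 : Type*} [Fintype Ω] [Fintype 𝒳]
    [Fintype 𝒴] [Fintype 𝒥] (μ : FinProb Ω) (n : ℕ) (M : ℕ) [NeZero M]
    (X : Fin n → Ω → 𝒳) (Y : Fin n → Ω → 𝒴)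
    (q : 𝒳 → ℝ) (w : 𝒳 → 𝒴 → ℝ)
    (hchan : ∀ (x : Fin n → 𝒳) (y : Fin n → 𝒴),
      dist μ (fun ω => (fun t => X t ω, fun t => Y t ω)) (x, y) =
        ∏ t, q (x t) * w (x t) (y t))
    (S : Ω → ZMod M) (φ : (Fin n → 𝒴) → ZMod M) (ψ : (Fin n → 𝒴) → 𝒥)
    (hunif : Uniform μ S)
    (hind : IndepRV μ S (fun ω => (fun t => X t ω, fun t => Y t ω))) :
    (1 / n : ℝ) * MuI μ (fun ω t => X t ω)
        (fun ω => (ψ (fun t => Y t ω), S ω + φ (fun t => Y t ω))) =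
    (1 / n : ℝ) * MuI μ (fun ω t => X t ω) (fun ω => ψ (fun t => Y t ω)) := by
  classical
  have hA : ∀ (c : 𝒥) (m : ZMod M),
      dist μ (fun ω => (ψ (fun t => Y t ω), S ω + φ (fun t => Y t ω))) (c, m) =
        dist μ (fun ω => ψ (fun t => Y t ω)) c * (1 / (M : ℝ)) :=
    fun c m => dist_pair_add_unif μ M S (fun ω => (fun t => X t ω, fun t => Y t ω))
      hunif hind (fun b => φ b.2) (fun b => ψ b.2) c m
  have hB : ∀ (w : (Fin n → 𝒳) × 𝒥) (m : ZMod M),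
      dist μ (fun ω => ((fun t => X t ω, ψ (fun t => Y t ω)),
          S ω + φ (fun t => Y t ω))) (w, m) =
        dist μ (fun ω => (fun t => X t ω, ψ (fun t => Y t ω))) w * (1 / (M : ℝ)) :=
    fun w m => dist_pair_add_unif μ M S (fun ω => (fun t => X t ω, fun t => Y t ω))
      hunif hind (fun b => φ b.2) (fun b => (b.1, ψ b.2)) w m
  have e1 : Hent μ (fun ω => (ψ (fun t => Y t ω), S ω + φ (fun t => Y t ω))) =
      Hent μ (fun ω => ψ (fun t => Y t ω)) + Real.logb 2 M :=
    hent_pair_unif μ M _ _ hA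
  have e2 : Hent μ (fun ω => ((fun t => X t ω, ψ (fun t => Y t ω)),
        S ω + φ (fun t => Y t ω))) =
      Hent μ (fun ω => (fun t => X t ω, ψ (fun t => Y t ω))) + Real.logb 2 M :=
    hent_pair_unif μ M _ _ hB
  have e3 : Hent μ (fun ω => ((fun t => X t ω),
        (ψ (fun t => Y t ω), S ω + φ (fun t => Y t ω)))) =
      Hent μ (fun ω => ((fun t => X t ω, ψ (fun t => Y t ω)),
        S ω + φ (fun t => Y t ω))) :=
    hent_comp_equiv μ (fun ω => ((fun t => X t ω, ψ (fun t => Y t ω)),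
      S ω + φ (fun t => Y t ω))) (Equiv.prodAssoc (Fin n → 𝒳) 𝒥 (ZMod M))
  simp only [MuI]
  rw [e1, e3, e2]
  ring
end
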